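/- Let d ≥ 1, let ρ ∈ [0,∞), let Λ ⊆ [0,1]^d be ρ-proximate, and set ρ' = min(ρ, 1/2). Then for every SLKKM coloring χ : Λ → C and every ε ∈ (0, 1/2], there exists a point p ∈ [0,1]^d such that the open ℓ∞ ball of radius ε centered at p contains points of Λ of at least ⌈(1 + (2/3)(ε−ρ'))^d⌉ different colors. -/

import Mathlib

/-- A face of the cube `[0,1]^d`: a product `∏ᵢ Fᵢ` where each `Fᵢ` is `{0}`, `{1}`, or `[0,1]`. -/
def IsFace (d : ℕ) (F : Set (Fin d → ℝ)) : Prop :=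
  ∃ s : Fin d → Set ℝ,
    (∀ i, s i = {0} ∨ s i = {1} ∨ s i = Set.Icc 0 1) ∧ F = Set.univ.pi s

/-- `Λ ⊆ [0,1]^d` is `ρ`-proximate: for every face `F` and every `x ∈ F` there is
`y ∈ F ∩ Λ` with `‖x − y‖_∞ ≤ ρ`. -/
def IsProximate (d : ℕ) (ρ : ℝ) (Λ : Set (Fin d → ℝ)) : Prop :=
  ∀ F : Set (Fin d → ℝ), IsFace d F → ∀ x ∈ F, ∃ y ∈ F ∩ Λ, dist x y ≤ ρ

/-!
If `ε ≤ min ρ (1/2)` the bound is `1`, and `0 ∈ Λ` by proximity. Otherwise record for each color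
`c` the pattern `τ(c) ∈ {0,1}^d` of facets `xᵢ = 1` it meets; by the SLKKM condition a color with
`τ(c)ᵢ = 1` never meets the facet `xᵢ = 0`. Let `η = (ε - ρ)/3` and let `B_τ` be the set of points
of the cube within `ε` of a point of `Λ` whose color has pattern `τ`. Rounding a point `q` of the
enlarged cube `[-η, 1 + η]^d` to the face it is `η`-close to and applying proximity yields a
`y ∈ Λ` such that `q` shifted by `η` away from the facets marked in `τ(χ y)` lies in
`B_{τ(χ y)}`. Hence `∑_τ vol B_τ ≥ (1 + 2η)^d`, so some point of the cube lies in
`⌈(1 + 2η)^d⌉` of the sets `B_τ`, and distinct patterns come from distinct colors.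
-/

open MeasureTheory Set
open scoped ENNReal Finset

section Multiplicity

variable {α ι : Type*}

theorem exists_lt_card_filter_mem_of_mul_measure_lt_sum [MeasurableSpace α] {μ : Measure α}
    {s : Finset ι} {B : ι → Set α} [∀ i, DecidablePred (· ∈ B i)] {S : Set α}
    (hB : ∀ i ∈ s, MeasurableSet (B i)) (hBS : ∀ i ∈ s, B i ⊆ S) {m : ℕ}
    (h : m * μ S < ∑ i ∈ s, μ (B i)) :
    ∃ x ∈ S, m < #{i ∈ s | x ∈ B i} := by
  by_contra! hle
  have hpoint : ∀ x, ∑ i ∈ s, (B i).indicator 1 x ≤ S.indicator (fun _ ↦ (m : ℝ≥0∞)) x := by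
    intro x
    by_cases hx : x ∈ S
    · rw [indicator_of_mem hx]
      simp only [indicator_apply, Pi.one_apply, Finset.sum_boole]
      exact_mod_cast hle x hx
    · have hxB : ∀ i ∈ s, x ∉ B i := fun i hi hxi ↦ hx (hBS i hi hxi)
      rw [indicator_of_notMem hx]
      exact (Finset.sum_eq_zero fun i hi ↦ indicator_of_notMem (hxB i hi) _).le
  refine h.not_ge ?_
  calc ∑ i ∈ s, μ (B i) = ∫⁻ x, ∑ i ∈ s, (B i).indicator 1 x ∂μ := by
        rw [lintegral_finsetSum' _ fun i hi ↦ (measurable_one.indicator (hB i hi)).aemeasurable]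
        exact Finset.sum_congr rfl fun i hi ↦ (lintegral_indicator_one (hB i hi)).symm
    _ ≤ ∫⁻ x, S.indicator (fun _ ↦ (m : ℝ≥0∞)) x ∂μ := lintegral_mono hpoint
    _ ≤ m * μ S := lintegral_indicator_const_le S _

theorem measure_le_sum_of_forall_exists_add_mem {G : Type*} [MeasurableSpace G] [AddGroup G]
    [MeasurableAdd G] (μ : Measure G) [μ.IsAddRightInvariant] (s : Finset ι) (B : ι → Set G)
    (w : ι → G) {K : Set G} (hK : ∀ q ∈ K, ∃ i ∈ s, q + w i ∈ B i) :
    μ K ≤ ∑ i ∈ s, μ (B i) :=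
  calc μ K ≤ μ (⋃ i ∈ s, (· + w i) ⁻¹' B i) := measure_mono fun q hq ↦ by simpa using hK q hq
    _ ≤ ∑ i ∈ s, μ ((· + w i) ⁻¹' B i) := measure_biUnion_finset_le s _
    _ = ∑ i ∈ s, μ (B i) := by simp only [measure_preimage_add_right]

end Multiplicity

section Pattern

variable {ι C : Type*}

theorem dist_eq_one_of_apply_eq_zero_of_apply_eq_one [Fintype ι] {x y : ι → ℝ}
    (hx : x ∈ Icc 0 1) (hy : y ∈ Icc 0 1) {i : ι} (hxi : x i = 0) (hyi : y i = 1) :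
    dist x y = 1 := by
  refine le_antisymm ((dist_pi_le_iff zero_le_one).mpr fun j ↦ ?_) ?_
  · exact Real.dist_le_of_mem_Icc_01 ⟨hx.1 j, hx.2 j⟩ ⟨hy.1 j, hy.2 j⟩
  · simpa [hxi, hyi] using dist_le_pi_dist x y i

open Classical in
noncomputable def colorPattern (Λ : Set (ι → ℝ)) (χ : (ι → ℝ) → C) (c : C) (i : ι) : Bool :=
  decide (∃ y ∈ Λ, χ y = c ∧ y i = 1)

variable {Λ : Set (ι → ℝ)} {χ : (ι → ℝ) → C}

theorem colorPattern_eq_true {y : ι → ℝ} (hy : y ∈ Λ) {i : ι} (hyi : y i = 1) :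
    colorPattern Λ χ (χ y) i = true := by
  simpa [colorPattern] using ⟨y, hy, rfl, hyi⟩

theorem colorPattern_eq_false [Fintype ι] (hΛ : Λ ⊆ Icc 0 1)
    (hχ : ∀ x ∈ Λ, ∀ y ∈ Λ, dist x y = 1 → χ x ≠ χ y) {y : ι → ℝ} (hy : y ∈ Λ) {i : ι}
    (hyi : y i = 0) : colorPattern Λ χ (χ y) i = false := by
  simp only [colorPattern, decide_eq_false_iff_not]
  rintro ⟨y', hy', hc, hy'i⟩
  exact hχ y hy y' hy' (dist_eq_one_of_apply_eq_zero_of_apply_eq_one (hΛ hy) (hΛ hy') hyi hy'i)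
    hc.symm

end Pattern

theorem IsProximate.exists_dist_le_of_mem_Icc {d : ℕ} {ρ : ℝ} {Λ : Set (Fin d → ℝ)}
    (h : IsProximate d ρ Λ) {x : Fin d → ℝ} (hx : x ∈ Icc 0 1) :
    ∃ y ∈ Λ, dist x y ≤ ρ ∧ ∀ i, x i = 0 ∨ x i = 1 → y i = x i := by
  classical
  let s : Fin d → Set ℝ := fun i ↦ if x i = 0 ∨ x i = 1 then {x i} else Icc 0 1
  have hface : IsFace d (univ.pi s) := by
    refine ⟨s, fun i ↦ ?_, rfl⟩
    by_cases hi : x i = 0 ∨ x i = 1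
    · rcases hi with hi | hi <;> simp [s, hi]
    · simp [s, hi]
  have hxF : x ∈ univ.pi s := fun i _ ↦ by
    by_cases hi : x i = 0 ∨ x i = 1
    · simp [s, hi]
    · simpa [s, hi] using And.intro (hx.1 i) (hx.2 i)
  obtain ⟨y, ⟨hyF, hyΛ⟩, hxy⟩ := h _ hface x hxF
  exact ⟨y, hyΛ, hxy, fun i hi ↦ by simpa [s, hi] using hyF i (mem_univ i)⟩

noncomputable def roundNearBoundary (η t : ℝ) : ℝ :=
  if t < η then 0 else if 1 - η < t then 1 else t

theorem roundNearBoundary_mem_Icc {η t : ℝ} (hη : 0 ≤ η) : roundNearBoundary η t ∈ Icc 0 1 := by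
  unfold roundNearBoundary
  split_ifs with h₀ h₁ <;> constructor <;> linarith

def patternShift {ι : Type*} (η : ℝ) (τ : ι → Bool) (i : ι) : ℝ := if τ i then -η else η

theorem add_shift_mem_Icc_and_abs_sub_lt {η ρ ε t y : ℝ} {b : Bool} (hη : 0 ≤ η)
    (h2η : 2 * η ≤ 1) (hηε : 2 * η ≤ ε) (hρηε : ρ + η < ε) (ht : t ∈ Icc (-η) (1 + η))
    (hy : |roundNearBoundary η t - y| ≤ ρ)
    (hy₀₁ : roundNearBoundary η t = 0 ∨ roundNearBoundary η t = 1 → y = roundNearBoundary η t)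
    (hb₀ : y = 0 → b = false) (hb₁ : y = 1 → b = true) :
    t + (if b then -η else η) ∈ Icc 0 1 ∧ |t + (if b then -η else η) - y| < ε := by
  obtain ⟨ht₀, ht₁⟩ := ht
  unfold roundNearBoundary at hy hy₀₁
  split_ifs at hy hy₀₁ with h₀ h₁
  · obtain rfl := hy₀₁ (Or.inl rfl)
    rw [hb₀ rfl, if_neg Bool.false_ne_true, abs_lt]
    refine ⟨⟨?_, ?_⟩, ?_, ?_⟩ <;> linarith
  · obtain rfl := hy₀₁ (Or.inr rfl)
    rw [hb₁ rfl, if_pos rfl, abs_lt]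
    refine ⟨⟨?_, ?_⟩, ?_, ?_⟩ <;> linarith
  · obtain ⟨hy₁, hy₂⟩ := abs_le.mp hy
    cases b <;> simp only [Bool.false_eq_true, if_true, if_false, abs_lt] <;>
      refine ⟨⟨?_, ?_⟩, ?_, ?_⟩ <;> linarith

theorem IsProximate.exists_add_patternShift_mem {d : ℕ} {C : Type*} {ρ ε η : ℝ}
    {Λ : Set (Fin d → ℝ)} {χ : (Fin d → ℝ) → C} (hprox : IsProximate d ρ Λ)
    (hΛ : Λ ⊆ Icc 0 1) (hχ : ∀ x ∈ Λ, ∀ y ∈ Λ, dist x y = 1 → χ x ≠ χ y) (hη : 0 ≤ η)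
    (h2η : 2 * η ≤ 1) (hηε : 2 * η ≤ ε) (hρηε : ρ + η < ε) {q : Fin d → ℝ}
    (hq : q ∈ Icc (fun _ ↦ -η) (fun _ ↦ 1 + η)) :
    ∃ y ∈ Λ, q + patternShift η (colorPattern Λ χ (χ y)) ∈ Icc 0 1 ∩ Metric.ball y ε := by
  obtain ⟨y, hyΛ, hxy, hy₀₁⟩ := hprox.exists_dist_le_of_mem_Icc
    (x := fun i ↦ roundNearBoundary η (q i))
    ⟨fun i ↦ (roundNearBoundary_mem_Icc hη).1, fun i ↦ (roundNearBoundary_mem_Icc hη).2⟩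
  have hcoord i := add_shift_mem_Icc_and_abs_sub_lt (b := colorPattern Λ χ (χ y) i) hη h2η hηε
    hρηε ⟨hq.1 i, hq.2 i⟩ (by simpa [Real.dist_eq] using (dist_le_pi_dist _ y i).trans hxy)
    (hy₀₁ i) (colorPattern_eq_false hΛ hχ hyΛ) (colorPattern_eq_true hyΛ)
  refine ⟨y, hyΛ, ⟨fun i ↦ (hcoord i).1.1, fun i ↦ (hcoord i).1.2⟩, ?_⟩
  rw [Metric.mem_ball, dist_pi_lt_iff (by linarith [dist_nonneg.trans hxy])]
  exact fun i ↦ (hcoord i).2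

section Region

variable {ι C : Type*} [Fintype ι] {Λ : Set (ι → ℝ)} {χ : (ι → ℝ) → C} {ε : ℝ}

def colorRegion (Λ : Set (ι → ℝ)) (χ : (ι → ℝ) → C) (ε : ℝ) (τ : ι → Bool) : Set (ι → ℝ) :=
  Icc 0 1 ∩ ⋃ y ∈ {y ∈ Λ | colorPattern Λ χ (χ y) = τ}, Metric.ball y ε

theorem measurableSet_colorRegion (τ : ι → Bool) : MeasurableSet (colorRegion Λ χ ε τ) :=
  measurableSet_Icc.inter (isOpen_biUnion fun _ _ ↦ Metric.isOpen_ball).measurableSet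

theorem colorRegion_subset_Icc (τ : ι → Bool) : colorRegion Λ χ ε τ ⊆ Icc 0 1 :=
  inter_subset_left

theorem card_filter_mem_colorRegion_le [DecidableEq ι]
    [∀ τ, DecidablePred (· ∈ colorRegion Λ χ ε τ)] (p : ι → ℝ) :
    (#{τ | p ∈ colorRegion Λ χ ε τ} : ℕ∞) ≤
      {c : C | (Λ ∩ χ ⁻¹' {c} ∩ Metric.ball p ε).Nonempty}.encard := by
  have hsub : {τ | p ∈ colorRegion Λ χ ε τ} ⊆
      colorPattern Λ χ '' {c : C | (Λ ∩ χ ⁻¹' {c} ∩ Metric.ball p ε).Nonempty} := by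
    rintro τ ⟨-, hp⟩
    obtain ⟨y, ⟨hyΛ, rfl⟩, hpy⟩ := mem_iUnion₂.mp hp
    exact ⟨χ y, ⟨y, ⟨hyΛ, rfl⟩, Metric.mem_ball_comm.mp hpy⟩, rfl⟩
  calc (#{τ | p ∈ colorRegion Λ χ ε τ} : ℕ∞)
      = {τ | p ∈ colorRegion Λ χ ε τ}.encard := by
        rw [← encard_coe_eq_coe_finsetCard]; simp
    _ ≤ _ := (encard_mono hsub).trans (encard_image_le _ _)

end Region

theorem IsProximate.zero_mem {d : ℕ} {ρ : ℝ} {Λ : Set (Fin d → ℝ)} (h : IsProximate d ρ Λ) :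
    0 ∈ Λ := by
  obtain ⟨y, hyΛ, -, hy⟩ := h.exists_dist_le_of_mem_Icc (left_mem_Icc.mpr zero_le_one)
  rwa [show y = 0 from funext fun i ↦ hy i (Or.inl rfl)] at hyΛ

theorem IsProximate.exists_le_encard_colors {d : ℕ} {C : Type*} {ρ ε : ℝ}
    {Λ : Set (Fin d → ℝ)} {χ : (Fin d → ℝ) → C} (hprox : IsProximate d ρ Λ) (hρ : 0 ≤ ρ)
    (hΛ : Λ ⊆ Icc 0 1) (hχ : ∀ x ∈ Λ, ∀ y ∈ Λ, dist x y = 1 → χ x ≠ χ y) (hρε : ρ < ε)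
    (hε : ε ≤ 1 / 2) :
    ∃ p ∈ Icc (0 : Fin d → ℝ) 1, (⌈(1 + (2 / 3) * (ε - ρ)) ^ d⌉₊ : ℕ∞) ≤
      {c : C | (Λ ∩ χ ⁻¹' {c} ∩ Metric.ball p ε).Nonempty}.encard := by
  classical
  set x := (1 + (2 / 3) * (ε - ρ)) ^ d with hx_def
  set η := (ε - ρ) / 3 with hη
  have hx : 0 < x := by positivity
  have hvol : volume (Icc (fun _ ↦ -η) (fun _ ↦ 1 + η) : Set (Fin d → ℝ)) = ENNReal.ofReal x := by
    rw [Real.volume_Icc_pi, Finset.prod_const, Finset.card_univ, Fintype.card_fin,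
      ← ENNReal.ofReal_pow (by linarith), hx_def]
    congr 2
    ring
  have hcover : ENNReal.ofReal x ≤ ∑ τ, volume (colorRegion Λ χ ε τ) :=
    hvol ▸ measure_le_sum_of_forall_exists_add_mem volume _ _ (patternShift η) fun q hq ↦ by
      obtain ⟨y, hyΛ, hq', hqy⟩ := hprox.exists_add_patternShift_mem (ε := ε) hΛ hχ
        (by positivity) (by linarith) (by linarith) (by linarith) hq
      exact ⟨_, Finset.mem_univ _, hq', mem_iUnion₂.mpr ⟨y, ⟨hyΛ, rfl⟩, hqy⟩⟩
  have hceil : ((⌈x⌉₊ - 1 : ℕ) : ℝ) < x := by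
    by_contra! hle
    have := Nat.ceil_le.mpr hle
    have := Nat.ceil_pos.mpr hx
    omega
  have hlt : ((⌈x⌉₊ - 1 : ℕ) : ℝ≥0∞) * volume (Icc (0 : Fin d → ℝ) 1) <
      ∑ τ, volume (colorRegion Λ χ ε τ) := by
    rw [Real.volume_Icc_pi]
    simpa using ((ENNReal.ofReal_lt_ofReal_iff hx).mpr hceil).trans_le hcover
  obtain ⟨p, hp, hmany⟩ := exists_lt_card_filter_mem_of_mul_measure_lt_sum
    (fun τ _ ↦ measurableSet_colorRegion τ) (fun τ _ ↦ colorRegion_subset_Icc τ) hlt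
  exact ⟨p, hp, le_trans (by exact_mod_cast Nat.le_of_pred_lt hmany)
    (card_filter_mem_colorRegion_le p)⟩

theorem neighborhood_sperner_half_general
    (d : ℕ) (ρ : ℝ) (hρ : 0 ≤ ρ)
    (Λ : Set (Fin d → ℝ)) (hΛ : Λ ⊆ Set.Icc 0 1) (hprox : IsProximate d ρ Λ)
    (C : Type*) (χ : (Fin d → ℝ) → C)
    (hχ : ∀ x ∈ Λ, ∀ y ∈ Λ, dist x y = 1 → χ x ≠ χ y)
    (ε : ℝ) (hε : ε ∈ Set.Ioc (0 : ℝ) (1/2)) :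
    ∃ p ∈ Set.Icc (0 : Fin d → ℝ) 1,
      (⌈(1 + (2/3) * (ε - min ρ (1/2))) ^ d⌉₊ : ℕ∞) ≤
        {c : C | (Λ ∩ χ ⁻¹' {c} ∩ Metric.ball p ε).Nonempty}.encard := by
  obtain ⟨hε₀, hε⟩ := hε
  rcases lt_or_ge ρ ε with hρε | hερ
  · rw [min_eq_left (by linarith)]
    exact hprox.exists_le_encard_colors hρ hΛ hχ hρε hε
  · refine ⟨0, left_mem_Icc.mpr zero_le_one, ?_⟩
    have hbase : 1 + (2 / 3) * (ε - min ρ (1 / 2)) ≤ 1 := by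
      have : ε ≤ min ρ (1 / 2) := le_min hερ hε
      linarith
    have hceil : ⌈(1 + (2 / 3) * (ε - min ρ (1 / 2))) ^ d⌉₊ ≤ 1 := Nat.ceil_le.mpr <| by
      simpa using pow_le_one₀ (by linarith [min_le_right ρ (1 / 2)]) hbase
    exact le_trans (by exact_mod_cast hceil) <| one_le_encard_iff_nonempty.mpr
      ⟨χ 0, 0, ⟨hprox.zero_mem, rfl⟩, Metric.mem_ball_self hε₀⟩

/-- **Neighborhood Sperner Lemma, `ε ∈ (0, 1/2]` version.** If `Λ ⊆ [0,1]^d` is `ρ`-proximate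
and `χ` is an SLKKM coloring of `Λ`, then with `ρ' = min(ρ, 1/2)`, for any `ε ∈ (0, 1/2]`
there is a point `p` of the cube whose open `ℓ∞` `ε`-ball contains points of `Λ` of at least
`⌈(1 + (2/3)(ε−ρ'))^d⌉` different colors. -/
theorem neighborhood_sperner_half
    (d : ℕ) (hd : 1 ≤ d) (ρ : ℝ) (hρ : 0 ≤ ρ)
    (Λ : Set (Fin d → ℝ)) (hΛ : Λ ⊆ Set.Icc 0 1) (hprox : IsProximate d ρ Λ)
    (C : Type*) (χ : (Fin d → ℝ) → C)
    (hχ : ∀ x ∈ Λ, ∀ y ∈ Λ, dist x y = 1 → χ x ≠ χ y)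
    (ε : ℝ) (hε : ε ∈ Set.Ioc (0 : ℝ) (1/2)) :
    ∃ p ∈ Set.Icc (0 : Fin d → ℝ) 1,
      (⌈(1 + (2/3) * (ε - min ρ (1/2))) ^ d⌉₊ : ℕ∞) ≤
        {c : C | (Λ ∩ χ ⁻¹' {c} ∩ Metric.ball p ε).Nonempty}.encard :=
  neighborhood_sperner_half_general d ρ hρ Λ hΛ hprox C χ hχ ε hε
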